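/- Let μ be a finite positive Borel measure on the unit circle T whose Radon–Nikodym derivative μ' with respect to Lebesgue measure on T satisfies: log μ' is not Lebesgue-integrable on T. Fix a sequence {w_n} ⊂ T, and for each n let ζ_{0n}, …, ζ_{nn} ∈ T be the zeros of the para-orthogonal polynomial B_{n+1}(w_n,·) and K_n the Christoffel kernel. Then for every continuous function f : T → ℂ, the Szegő quadrature sums Q_n(f) := Σ_{j=0}^n f(ζ_{jn}) / K_n(ζ_{jn}, ζ_{jn}) converge to ∫_T f dμ as n → ∞. -/

import Mathlib

open MeasureTheory Polynomial Filter
open scoped ComplexConjugate Topology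

/-- The Christoffel kernel `K_n(w,z) = ∑_{j=0}^n conj(φ_j(w)) φ_j(z)`. -/
noncomputable def christoffelK (φ : ℕ → Polynomial ℂ) (n : ℕ) (w z : ℂ) : ℂ :=
  ∑ j ∈ Finset.range (n + 1), conj ((φ j).eval w) * (φ j).eval z

/-- The para-orthogonal polynomial `B_{n+1}(w,z) = (1 − conj(w) z) K_n(w,z)`. -/
noncomputable def paraOrtho (φ : ℕ → Polynomial ℂ) (n : ℕ) (w z : ℂ) : ℂ :=
  (1 - conj w * z) * christoffelK φ n w z

/-- The `j`-th fundamental (Lagrange) polynomial for the nodes `ζ`: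
`ℓ_{jn}(z) = K_n(z, ζ_{jn}) / K_n(ζ_{jn}, ζ_{jn})`.  Note that by Hermitian symmetry of the
kernel, `K_n(z, ζ) = conj (K_n(ζ, z))`; as a *polynomial* in `z` (of degree `n`, as in the
paper) the fundamental polynomial is `z ↦ K_n(ζ_{jn}, z) / K_n(ζ_{jn}, ζ_{jn})`, with
`K_n(ζ_{jn}, ζ_{jn}) = ∑_k |φ_k(ζ_{jn})|²` a positive real number. -/
noncomputable def ellFun (φ : ℕ → Polynomial ℂ) (n : ℕ) (ζ : Fin (n + 1) → ℂ)
    (j : Fin (n + 1)) (z : ℂ) : ℂ :=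
  christoffelK φ n (ζ j) z / christoffelK φ n (ζ j) (ζ j)

/-- The `n`-th Lagrange interpolation polynomial of `f` at the nodes `ζ`:
`L_n(f)(z) = ∑_{j=0}^n f(ζ_{jn}) ℓ_{jn}(z)`. -/
noncomputable def lagrangeInterp (φ : ℕ → Polynomial ℂ) (n : ℕ) (ζ : Fin (n + 1) → ℂ)
    (f : ℂ → ℂ) (z : ℂ) : ℂ :=
  ∑ j : Fin (n + 1), f (ζ j) * ellFun φ n ζ j z

/-- The Lebesgue (arclength) measure `𝔪` on the unit circle `T ⊆ ℂ`, obtained as the image of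
Lebesgue measure on `(0, 2π]` under `θ ↦ e^{iθ}`. -/
noncomputable def circleLeb : Measure ℂ :=
  Measure.map (fun θ : ℝ => Complex.exp (θ * Complex.I))
    (MeasureTheory.volume.restrict (Set.Ioc 0 (2 * Real.pi)))

/-!
Szegő quadrature (nodes `ζ_j`, weights `1 / K_n(ζ_j, ζ_j)`) is exact for Laurent polynomials
of degree at most `n`, i.e. `∫ P(z) z̄ⁿ dμ = ∑_j P(ζ_j) ζ̄_jⁿ / K_n(ζ_j, ζ_j)` for `deg P ≤ 2n`.
Both sides depend only on the values `P(ζ_j)`: if `P` vanishes at the nodes, it is `B_{n+1}(w, ·)`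
times a polynomial of degree `< n`, and `B_{n+1}(w, ·)` is orthogonal to `z, …, zⁿ` by the
reproducing property of `K_n`, so `∫ P z̄ⁿ dμ = 0`. The weights are then read off from the
polynomial `K_n(ζ_j, z) zⁿ conj(ℓ_j(z))`, `ℓ_j` the Lagrange basis polynomial, whose integral the
reproducing property computes.
The quadrature functionals are positive with total mass `μ(T)`, hence uniformly Lipschitz on
`C(T)`, and Laurent polynomials are dense in `C(T)` by Stone–Weierstrass; so convergence on them
propagates to every continuous function.
-/

namespace SzegoQuadrature

theorem mem_span_image_Iio_of_degree_lt {K : Type*} [Field K] {φ : ℕ → K[X]}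
    (hφ : ∀ k, (φ k).degree = k) {n : ℕ} {p : K[X]} (hp : p.degree < n) :
    p ∈ Submodule.span K (φ '' Set.Iio n) := by
  induction n generalizing p with
  | zero =>
    rw [Nat.cast_zero, Nat.WithBot.lt_zero_iff, degree_eq_bot] at hp
    simp [hp]
  | succ n ih =>
    have hφn : (φ n).natDegree = n := natDegree_eq_of_degree_eq_some (hφ n)
    have hlc : (φ n).coeff n ≠ 0 := coeff_ne_zero_of_eq_degree (hφ n)
    set a := p.coeff n / (φ n).coeff n
    have hq : (p - a • φ n).degree < n := by
      rw [degree_lt_iff_coeff_zero]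
      intro m hm
      rcases hm.eq_or_lt with rfl | hm
      · simp [a, hlc]
      · rw [coeff_sub, coeff_smul, coeff_eq_zero_of_degree_lt (hp.trans_le (by exact_mod_cast hm)),
          coeff_eq_zero_of_natDegree_lt (hφn.trans_lt hm), smul_zero, sub_zero]
    rw [← sub_add_cancel p (a • φ n)]
    exact add_mem (Submodule.span_mono (Set.image_mono (Set.Iio_subset_Iio n.le_succ)) (ih hq))
      (Submodule.smul_mem _ _ (Submodule.subset_span ⟨n, n.lt_succ_self, rfl⟩))

theorem nodal_dvd_of_eval_eq_zero {F ι : Type*} [Field F] {s : Finset ι} {v : ι → F}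
    (hvs : Set.InjOn v s) {P : F[X]} (hP : ∀ i ∈ s, P.eval (v i) = 0) :
    Lagrange.nodal s v ∣ P := by
  rw [← modByMonic_eq_zero_iff_dvd Lagrange.nodal_monic]
  refine eq_zero_of_degree_lt_of_eval_index_eq_zero s hvs ?_ fun i hi => ?_
  · rw [← Lagrange.degree_nodal (v := v)]
    exact degree_modByMonic_lt _ Lagrange.nodal_monic
  · rw [modByMonic_eq_sub_mul_div, eval_sub, eval_mul, Lagrange.eval_nodal_at_node hi, hP i hi,
      zero_mul, sub_zero]

theorem lipschitzWith_integral_continuousMap {X E : Type*} [TopologicalSpace X] [CompactSpace X]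
    [MeasurableSpace X] [OpensMeasurableSpace X] [NormedAddCommGroup E] [NormedSpace ℝ E]
    (ν : Measure X) [IsFiniteMeasure ν] :
    LipschitzWith (ν Set.univ).toNNReal fun g : C(X, E) => ∫ x, g x ∂ν := by
  have hint : ∀ g : C(X, E), Integrable g ν := fun g =>
    g.continuous.integrable_of_hasCompactSupport (HasCompactSupport.of_compactSpace g)
  refine LipschitzWith.of_dist_le_mul fun g h => ?_
  rw [dist_eq_norm, ← integral_sub (hint g) (hint h), ENNReal.coe_toNNReal_eq_toReal,
    ← measureReal_def, mul_comm, dist_eq_norm]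
  exact norm_integral_le_of_norm_le_const (ae_of_all _ fun x => (g - h).norm_coe_le_norm x)

theorem mul_conj_of_norm_eq_one {z : ℂ} (hz : ‖z‖ = 1) : z * conj z = 1 := by
  simp [RCLike.mul_conj, hz]

theorem pow_mul_conj_pow_self_of_norm_eq_one {z : ℂ} (hz : ‖z‖ = 1) (n : ℕ) :
    z ^ n * conj z ^ n = 1 := by
  rw [← mul_pow, mul_conj_of_norm_eq_one hz, one_pow]

theorem pow_mul_conj_pow_of_norm_eq_one {z : ℂ} (hz : ‖z‖ = 1) {k n : ℕ} (hkn : k ≤ n) :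
    z ^ k * conj z ^ n = conj z ^ (n - k) := by
  rw [← Nat.sub_add_cancel hkn, pow_add, Nat.add_sub_cancel, mul_left_comm,
    pow_mul_conj_pow_self_of_norm_eq_one hz, mul_one]

noncomputable def conjReflect (m : ℕ) (q : ℂ[X]) : ℂ[X] :=
  (q.map (starRingEnd ℂ)).reflect m

theorem natDegree_conjReflect_le {m : ℕ} {q : ℂ[X]} (hq : q.natDegree ≤ m) :
    (conjReflect m q).natDegree ≤ m :=
  natDegree_reflect_le.trans (max_le le_rfl (natDegree_map_le.trans hq))

theorem eval_conjReflect {m : ℕ} {q : ℂ[X]} (hq : q.natDegree ≤ m) {z : ℂ} (hz : ‖z‖ = 1) :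
    (conjReflect m q).eval z = z ^ m * conj (q.eval z) := by
  let : Invertible (conj z) :=
    ⟨z, mul_conj_of_norm_eq_one hz, by rw [mul_comm, mul_conj_of_norm_eq_one hz]⟩
  have h := eval₂_reflect_mul_pow (RingHom.id ℂ) (conj z) m (q.map (starRingEnd ℂ))
    (natDegree_map_le.trans hq)
  rw [eval₂_id, eval₂_id, eval_map_apply] at h
  rw [← h, conjReflect, mul_left_comm, pow_mul_conj_pow_self_of_norm_eq_one hz, mul_one]
  rfl

noncomputable def christoffelDiag (φ : ℕ → ℂ[X]) (n : ℕ) (ξ : ℂ) : ℝ :=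
  ∑ k ∈ Finset.range (n + 1), ‖(φ k).eval ξ‖ ^ 2

theorem christoffelK_self (φ : ℕ → ℂ[X]) (n : ℕ) (ξ : ℂ) :
    christoffelK φ n ξ ξ = christoffelDiag φ n ξ := by
  simp [christoffelK, christoffelDiag, RCLike.conj_mul]

theorem christoffelDiag_pos {φ : ℕ → ℂ[X]} (hdeg : ∀ k, (φ k).degree = k) (n : ℕ) (ξ : ℂ) :
    0 < christoffelDiag φ n ξ := by
  have hφ0 : (φ 0).eval ξ ≠ 0 := by
    rw [eq_C_of_degree_eq_zero (hdeg 0), eval_C]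
    exact coeff_ne_zero_of_eq_degree (hdeg 0)
  exact Finset.sum_pos' (fun k _ => by positivity) ⟨0, by simp, by positivity⟩

@[fun_prop]
theorem continuous_christoffelK (φ : ℕ → ℂ[X]) (n : ℕ) (ξ : ℂ) :
    Continuous (christoffelK φ n ξ) := by
  unfold christoffelK
  fun_prop

@[fun_prop]
theorem continuous_paraOrtho (φ : ℕ → ℂ[X]) (n : ℕ) (w : ℂ) : Continuous (paraOrtho φ n w) := by
  unfold paraOrtho
  fun_prop

noncomputable def kernelPoly (φ : ℕ → ℂ[X]) (n : ℕ) (ξ : ℂ) : ℂ[X] :=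
  ∑ k ∈ Finset.range (n + 1), C (conj ((φ k).eval ξ)) * φ k

noncomputable def paraOrthoPoly (φ : ℕ → ℂ[X]) (n : ℕ) (w : ℂ) : ℂ[X] :=
  (1 - C (conj w) * X) * kernelPoly φ n w

@[simp]
theorem eval_kernelPoly (φ : ℕ → ℂ[X]) (n : ℕ) (ξ z : ℂ) :
    (kernelPoly φ n ξ).eval z = christoffelK φ n ξ z := by
  simp [kernelPoly, christoffelK, eval_finsetSum]

@[simp]
theorem eval_paraOrthoPoly (φ : ℕ → ℂ[X]) (n : ℕ) (w z : ℂ) :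
    (paraOrthoPoly φ n w).eval z = paraOrtho φ n w z := by
  simp [paraOrthoPoly, paraOrtho]

section ParaOrthoPoly

variable {φ : ℕ → ℂ[X]} (hdeg : ∀ k, (φ k).degree = k)
include hdeg

theorem natDegree_kernelPoly_le (n : ℕ) (ξ : ℂ) : (kernelPoly φ n ξ).natDegree ≤ n := by
  refine natDegree_sum_le_of_forall_le _ _ fun k hk => (natDegree_C_mul_le _ _).trans ?_
  rw [natDegree_eq_of_degree_eq_some (hdeg k)]
  exact Nat.lt_succ_iff.mp (Finset.mem_range.mp hk)

theorem natDegree_paraOrthoPoly_le (n : ℕ) (w : ℂ) :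
    (paraOrthoPoly φ n w).natDegree ≤ n + 1 := by
  refine natDegree_mul_le.trans (add_comm n 1 ▸ add_le_add ?_ (natDegree_kernelPoly_le hdeg n w))
  exact (natDegree_sub_le _ _).trans
    (max_le (by simp) ((natDegree_C_mul_le _ _).trans natDegree_X_le))

theorem paraOrthoPoly_ne_zero (n : ℕ) (w : ℂ) : paraOrthoPoly φ n w ≠ 0 := by
  refine mul_ne_zero (fun h => by simpa using congrArg (coeff · 0) h) fun h => ?_
  have := congrArg (eval w) h
  rw [eval_kernelPoly, christoffelK_self, eval_zero, Complex.ofReal_eq_zero] at this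
  exact (christoffelDiag_pos hdeg n w).ne' this

variable {n : ℕ} {w : ℂ} {ζ : Fin (n + 1) → ℂ} (hinj : Function.Injective ζ)
  (hzero : ∀ j, paraOrtho φ n w (ζ j) = 0)
include hinj hzero

theorem paraOrthoPoly_eq_C_mul_nodal :
    paraOrthoPoly φ n w = C (paraOrthoPoly φ n w).leadingCoeff * Lagrange.nodal Finset.univ ζ :=
  eq_leadingCoeff_mul_of_monic_of_dvd_of_natDegree_le Lagrange.nodal_monic
    (nodal_dvd_of_eval_eq_zero hinj.injOn fun j _ => by rw [eval_paraOrthoPoly, hzero])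
    (by simpa [Lagrange.natDegree_nodal] using natDegree_paraOrthoPoly_le hdeg n w)

theorem natDegree_paraOrthoPoly : (paraOrthoPoly φ n w).natDegree = n + 1 := by
  rw [paraOrthoPoly_eq_C_mul_nodal hdeg hinj hzero,
    natDegree_C_mul (leadingCoeff_ne_zero.mpr (paraOrthoPoly_ne_zero hdeg n w)),
    Lagrange.natDegree_nodal, Finset.card_univ, Fintype.card_fin]

theorem paraOrthoPoly_dvd {P : ℂ[X]} (hP : ∀ j, P.eval (ζ j) = 0) : paraOrthoPoly φ n w ∣ P := by
  rw [paraOrthoPoly_eq_C_mul_nodal hdeg hinj hzero,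
    C_mul_dvd (leadingCoeff_ne_zero.mpr (paraOrthoPoly_ne_zero hdeg n w))]
  exact nodal_dvd_of_eval_eq_zero hinj.injOn fun j _ => hP j

end ParaOrthoPoly

section Integrals

variable {μ : Measure ℂ} [IsFiniteMeasure μ] (hμ : μ (Metric.sphere (0 : ℂ) 1)ᶜ = 0)
include hμ

theorem integrable_of_continuousOn_sphere {E : Type*} [NormedAddCommGroup E] {g : ℂ → E}
    (hg : ContinuousOn g (Metric.sphere 0 1)) : Integrable g μ := by
  rw [← Measure.restrict_eq_self_of_ae_mem hμ]
  exact hg.integrableOn_compact (isCompact_sphere 0 1)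

omit [IsFiniteMeasure μ] in
theorem ae_norm_eq_one : ∀ᵐ z ∂μ, ‖z‖ = 1 := by
  filter_upwards [show ∀ᵐ z ∂μ, z ∈ Metric.sphere (0 : ℂ) 1 from hμ] with z hz
  simpa using hz

omit [IsFiniteMeasure μ] in
theorem integral_comap_sphere {E : Type*} [NormedAddCommGroup E] [NormedSpace ℝ E] (g : ℂ → E) :
    ∫ x : Metric.sphere (0 : ℂ) 1, g x ∂(μ.comap Subtype.val) = ∫ z, g z ∂μ := by
  rw [integral_subtype_comap Metric.isClosed_sphere.measurableSet,
    Measure.restrict_eq_self_of_ae_mem (s := Metric.sphere (0 : ℂ) 1) hμ]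

variable {φ : ℕ → ℂ[X]} (hdeg : ∀ k, (φ k).degree = k)
  (horth : ∀ k m, ∫ z, (φ k).eval z * conj ((φ m).eval z) ∂μ = if k = m then 1 else 0)
include hdeg horth

theorem integral_christoffelK_mul_conj_eval {n : ℕ} (ξ : ℂ) {p : ℂ[X]} (hp : p.natDegree ≤ n) :
    ∫ z, christoffelK φ n ξ z * conj (p.eval z) ∂μ = conj (p.eval ξ) := by
  have hint : ∀ q : ℂ[X], Integrable (fun z => christoffelK φ n ξ z * conj (q.eval z)) μ :=
    fun q => integrable_of_continuousOn_sphere hμ (by fun_prop)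
  have hmem : p ∈ Submodule.span ℂ (φ '' Set.Iio (n + 1)) :=
    mem_span_image_Iio_of_degree_lt hdeg
      ((degree_le_of_natDegree_le hp).trans_lt (WithBot.coe_lt_coe.mpr n.lt_succ_self))
  clear hp
  induction hmem using Submodule.span_induction with
  | mem q hq =>
    obtain ⟨m, hm, rfl⟩ := hq
    simp_rw [christoffelK, Finset.sum_mul, mul_assoc]
    rw [integral_finsetSum _ fun k _ =>
      (integrable_of_continuousOn_sphere hμ (by fun_prop)).const_mul _]
    simp_rw [integral_const_mul, horth, mul_ite, mul_one, mul_zero]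
    simp [Finset.sum_ite_eq', Finset.mem_range.mpr hm]
  | zero => simp
  | add q r _ _ hq hr =>
    simp_rw [eval_add, map_add, mul_add]
    rw [integral_add (hint q) (hint r), hq, hr]
  | smul c q _ hq =>
    simp_rw [eval_smul, smul_eq_mul, map_mul, mul_left_comm _ (conj c)]
    rw [integral_const_mul, hq]

theorem integral_christoffelK_mul_conj_pow {n j : ℕ} (hj : j ≤ n) (w : ℂ) :
    ∫ z, christoffelK φ n w z * conj z ^ j ∂μ = conj w ^ j := by
  simpa using integral_christoffelK_mul_conj_eval hμ hdeg horth w (p := X ^ j) (by simpa using hj)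

theorem integral_paraOrtho_mul_conj_pow {n k : ℕ} (hk : 1 ≤ k) (hkn : k ≤ n) (w : ℂ) :
    ∫ z, paraOrtho φ n w z * conj z ^ k ∂μ = 0 := by
  have hpt : ∀ᵐ z ∂μ, paraOrtho φ n w z * conj z ^ k = christoffelK φ n w z * conj z ^ k
      - conj w * (christoffelK φ n w z * conj z ^ (k - 1)) := by
    filter_upwards [ae_norm_eq_one hμ] with z hz
    rw [paraOrtho, ← pow_mul_conj_pow_of_norm_eq_one hz hk]
    ring
  rw [integral_congr_ae hpt, integral_sub (integrable_of_continuousOn_sphere hμ (by fun_prop))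
      ((integrable_of_continuousOn_sphere hμ (by fun_prop)).const_mul _), integral_const_mul,
    integral_christoffelK_mul_conj_pow hμ hdeg horth hkn,
    integral_christoffelK_mul_conj_pow hμ hdeg horth (by omega), ← pow_succ',
    Nat.sub_add_cancel hk, sub_self]

theorem integral_paraOrtho_mul_eval_mul_conj_pow {n : ℕ} (w : ℂ) {S : ℂ[X]}
    (hS : S.natDegree < n) : ∫ z, paraOrtho φ n w z * S.eval z * conj z ^ n ∂μ = 0 := by
  have hpt : ∀ᵐ z ∂μ, paraOrtho φ n w z * S.eval z * conj z ^ n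
      = ∑ k ∈ Finset.range n, S.coeff k * (paraOrtho φ n w z * conj z ^ (n - k)) := by
    filter_upwards [ae_norm_eq_one hμ] with z hz
    rw [eval_eq_sum_range' hS, Finset.mul_sum, Finset.sum_mul]
    refine Finset.sum_congr rfl fun k hk => ?_
    rw [← pow_mul_conj_pow_of_norm_eq_one hz (Finset.mem_range.mp hk).le]
    ring
  rw [integral_congr_ae hpt, integral_finsetSum _ fun k _ =>
    (integrable_of_continuousOn_sphere hμ (by fun_prop)).const_mul _]
  refine Finset.sum_eq_zero fun k hk => ?_
  have hk := Finset.mem_range.mp hk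
  rw [integral_const_mul, integral_paraOrtho_mul_conj_pow hμ hdeg horth (by omega) (by omega),
    mul_zero]

variable {n : ℕ} {w : ℂ} {ζ : Fin (n + 1) → ℂ} (hζ : ∀ j, ζ j ∈ Metric.sphere (0 : ℂ) 1)
  (hinj : Function.Injective ζ) (hzero : ∀ j, paraOrtho φ n w (ζ j) = 0)
include hinj hzero

theorem integral_eval_mul_conj_pow_eq_zero {P : ℂ[X]} (hP : P.natDegree ≤ 2 * n)
    (hPζ : ∀ j, P.eval (ζ j) = 0) : ∫ z, P.eval z * conj z ^ n ∂μ = 0 := by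
  obtain ⟨S, rfl⟩ := paraOrthoPoly_dvd hdeg hinj hzero hPζ
  rcases eq_or_ne S 0 with rfl | hS
  · simp
  rw [natDegree_mul (paraOrthoPoly_ne_zero hdeg n w) hS,
    natDegree_paraOrthoPoly hdeg hinj hzero] at hP
  simp_rw [eval_mul, eval_paraOrthoPoly]
  exact integral_paraOrtho_mul_eval_mul_conj_pow hμ hdeg horth w (by omega)

theorem integral_eval_mul_conj_pow_eq_sum_basis {G : ℂ[X]} (hG : G.natDegree ≤ 2 * n) :
    ∫ z, G.eval z * conj z ^ n ∂μ
      = ∑ j, G.eval (ζ j) * ∫ z, (Lagrange.basis Finset.univ ζ j).eval z * conj z ^ n ∂μ := by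
  set H := Lagrange.interpolate Finset.univ ζ fun j => G.eval (ζ j)
  have hH : H.natDegree ≤ n := by
    refine natDegree_le_iff_degree_le.mpr ((Lagrange.degree_interpolate_le _ hinj.injOn).trans ?_)
    simp
  have hGH : ∫ z, G.eval z * conj z ^ n ∂μ = ∫ z, H.eval z * conj z ^ n ∂μ := by
    rw [← sub_eq_zero, ← integral_sub (integrable_of_continuousOn_sphere hμ (by fun_prop))
      (integrable_of_continuousOn_sphere hμ (by fun_prop))]
    simpa [sub_mul] using integral_eval_mul_conj_pow_eq_zero hμ hdeg horth hinj hzero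
      ((natDegree_sub_le _ _).trans (max_le hG (by omega))) fun j => by
        rw [eval_sub, Lagrange.eval_interpolate_at_node _ hinj.injOn (Finset.mem_univ j), sub_self]
  rw [hGH]
  simp_rw [H, Lagrange.interpolate_apply, eval_finsetSum, eval_mul, eval_C, Finset.sum_mul,
    mul_assoc]
  rw [integral_finsetSum _ fun j _ =>
    (integrable_of_continuousOn_sphere hμ (by fun_prop)).const_mul _]
  simp_rw [integral_const_mul]

include hζ

theorem integral_basis_mul_conj_pow (j : Fin (n + 1)) :
    ∫ z, (Lagrange.basis Finset.univ ζ j).eval z * conj z ^ n ∂μ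
      = conj (ζ j) ^ n / christoffelK φ n (ζ j) (ζ j) := by
  have hζ1 : ∀ i, ‖ζ i‖ = 1 := fun i => by simpa using hζ i
  set L := Lagrange.basis Finset.univ ζ j
  have hL : L.natDegree ≤ n := by
    simp [L, Lagrange.natDegree_basis hinj.injOn (Finset.mem_univ j)]
  -- `H` vanishes at every node but `ζ_j`, so the quadrature identity isolates the weight of
  -- `ζ_j`, while the reproducing property gives `∫ H z̄ⁿ dμ = conj (ℓ_j(ζ_j)) = 1`.
  set H := kernelPoly φ n (ζ j) * conjReflect n L
  have hH : H.natDegree ≤ 2 * n :=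
    natDegree_mul_le.trans ((add_le_add (natDegree_kernelPoly_le hdeg n _)
      (natDegree_conjReflect_le hL)).trans (by omega))
  have hHz : ∀ z, ‖z‖ = 1 → H.eval z = christoffelK φ n (ζ j) z * z ^ n * conj (L.eval z) :=
    fun z hz => by rw [eval_mul, eval_kernelPoly, eval_conjReflect hL hz, mul_assoc]
  have hint : ∫ z, H.eval z * conj z ^ n ∂μ = 1 := by
    rw [integral_congr_ae (g := fun z => christoffelK φ n (ζ j) z * conj (L.eval z))]
    · rw [integral_christoffelK_mul_conj_eval hμ hdeg horth _ hL,
        Lagrange.eval_basis_self hinj.injOn (Finset.mem_univ j), map_one]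
    filter_upwards [ae_norm_eq_one hμ] with z hz
    rw [hHz z hz]
    linear_combination christoffelK φ n (ζ j) z * conj (L.eval z) *
      pow_mul_conj_pow_self_of_norm_eq_one hz n
  have hsum := integral_eval_mul_conj_pow_eq_sum_basis hμ hdeg horth hinj hzero hH
  rw [hint, Finset.sum_eq_single j (fun i _ hij => by
      rw [hHz _ (hζ1 i), Lagrange.eval_basis_of_ne hij.symm (Finset.mem_univ i)]; simp)
    (by simp), hHz _ (hζ1 j), Lagrange.eval_basis_self hinj.injOn (Finset.mem_univ j), map_one,
    mul_one] at hsum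
  have hK : christoffelK φ n (ζ j) (ζ j) ≠ 0 := by
    rw [christoffelK_self]
    exact_mod_cast (christoffelDiag_pos hdeg n (ζ j)).ne'
  rw [eq_div_iff hK]
  linear_combination (-conj (ζ j) ^ n) * hsum - christoffelK φ n (ζ j) (ζ j) *
    (∫ z, L.eval z * conj z ^ n ∂μ) * pow_mul_conj_pow_self_of_norm_eq_one (hζ1 j) n

theorem integral_eval_mul_conj_pow_eq_sum {G : ℂ[X]} (hG : G.natDegree ≤ 2 * n) :
    ∫ z, G.eval z * conj z ^ n ∂μ
      = ∑ j, G.eval (ζ j) * conj (ζ j) ^ n / christoffelK φ n (ζ j) (ζ j) := by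
  simp_rw [integral_eval_mul_conj_pow_eq_sum_basis hμ hdeg horth hinj hzero hG,
    integral_basis_mul_conj_pow hμ hdeg horth hζ hinj hzero, mul_div_assoc]

theorem integral_eval_mul_conj_pow_eq_sum_of_le {N : ℕ} (hN : N ≤ n) {p : ℂ[X]}
    (hp : p.natDegree ≤ 2 * N) :
    ∫ z, p.eval z * conj z ^ N ∂μ
      = ∑ j, p.eval (ζ j) * conj (ζ j) ^ N / christoffelK φ n (ζ j) (ζ j) := by
  have hshift : ∀ z : ℂ, ‖z‖ = 1 → (X ^ (n - N) * p).eval z * conj z ^ n = p.eval z * conj z ^ N :=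
    fun z hz => by
      rw [eval_mul, eval_X_pow, mul_comm _ (p.eval z), mul_assoc,
        pow_mul_conj_pow_of_norm_eq_one hz (Nat.sub_le n N), Nat.sub_sub_self hN]
  have hG : (X ^ (n - N) * p).natDegree ≤ 2 * n :=
    natDegree_mul_le.trans (by rw [natDegree_X_pow]; omega)
  rw [← integral_congr_ae ((ae_norm_eq_one hμ).mono hshift),
    integral_eval_mul_conj_pow_eq_sum hμ hdeg horth hζ hinj hzero hG]
  exact Finset.sum_congr rfl fun j _ => by rw [hshift _ (by simpa using hζ j)]

theorem sum_inv_christoffelDiag : ∑ j, (christoffelDiag φ n (ζ j))⁻¹ = μ.real Set.univ := by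
  have h := integral_eval_mul_conj_pow_eq_sum_of_le hμ hdeg horth hζ hinj hzero (Nat.zero_le n)
    (p := 1) (by simp)
  simp only [eval_one, pow_zero, mul_one, integral_const, Complex.real_smul, one_div,
    christoffelK_self] at h
  exact_mod_cast h.symm

theorem lipschitzWith_sum_eval_div_christoffelK :
    LipschitzWith (μ Set.univ).toNNReal fun g : C(Metric.sphere (0 : ℂ) 1, ℂ) =>
      ∑ j, g ⟨ζ j, hζ j⟩ / christoffelK φ n (ζ j) (ζ j) := by
  refine LipschitzWith.of_dist_le_mul fun g h => ?_
  rw [dist_eq_norm, ← Finset.sum_sub_distrib, ENNReal.coe_toNNReal_eq_toReal, ← measureReal_def,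
    ← sum_inv_christoffelDiag hμ hdeg horth hζ hinj hzero, Finset.sum_mul, dist_eq_norm]
  refine (norm_sum_le _ _).trans (Finset.sum_le_sum fun j _ => ?_)
  rw [← sub_div, christoffelK_self, norm_div, Complex.norm_real,
    Real.norm_of_nonneg (christoffelDiag_pos hdeg n (ζ j)).le, div_eq_inv_mul]
  exact mul_le_mul_of_nonneg_left ((g - h).norm_coe_le_norm _)
    (inv_nonneg.mpr (christoffelDiag_pos hdeg n (ζ j)).le)

theorem sum_eval_div_christoffelK_eq_integral {g : C(Metric.sphere (0 : ℂ) 1, ℂ)} {N : ℕ}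
    (hN : N ≤ n) {p : ℂ[X]} (hp : p.natDegree ≤ 2 * N)
    (hgp : ∀ z : Metric.sphere (0 : ℂ) 1, g z * (z : ℂ) ^ N = p.eval (z : ℂ)) :
    ∑ j, g ⟨ζ j, hζ j⟩ / christoffelK φ n (ζ j) (ζ j) = ∫ x, g x ∂(μ.comap Subtype.val) := by
  have hg : ∀ z : Metric.sphere (0 : ℂ) 1, g z = p.eval (z : ℂ) * conj (z : ℂ) ^ N := fun z => by
    rw [← hgp, mul_assoc, pow_mul_conj_pow_self_of_norm_eq_one (by simp) N, mul_one]
  simp_rw [hg]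
  rw [integral_comap_sphere hμ fun z => p.eval z * conj z ^ N,
    integral_eval_mul_conj_pow_eq_sum_of_le hμ hdeg horth hζ hinj hzero hN hp]

end Integrals

noncomputable def laurentFunctions : StarSubalgebra ℂ C(Metric.sphere (0 : ℂ) 1, ℂ) where
  carrier := {g | ∃ (N : ℕ) (p : ℂ[X]), p.natDegree ≤ 2 * N ∧
    ∀ z : Metric.sphere (0 : ℂ) 1, g z * (z : ℂ) ^ N = p.eval (z : ℂ)}
  mul_mem' := by
    rintro g h ⟨N, p, hp, hgp⟩ ⟨M, q, hq, hhq⟩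
    refine ⟨N + M, p * q, natDegree_mul_le.trans (by omega), fun z => ?_⟩
    rw [ContinuousMap.mul_apply, eval_mul, ← hgp, ← hhq]
    ring
  one_mem' := ⟨0, 1, by simp, fun z => by simp⟩
  add_mem' := by
    rintro g h ⟨N, p, hp, hgp⟩ ⟨M, q, hq, hhq⟩
    refine ⟨N + M, p * X ^ M + q * X ^ N, ?_, fun z => ?_⟩
    · refine (natDegree_add_le _ _).trans (max_le ?_ ?_) <;>
        refine natDegree_mul_le.trans ?_ <;> rw [natDegree_X_pow] <;> omega
    · rw [ContinuousMap.add_apply, eval_add, eval_mul, eval_mul, eval_X_pow, eval_X_pow,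
        ← hgp, ← hhq]
      ring
  algebraMap_mem' r := ⟨0, C r, by simp, fun z => by simp⟩
  star_mem' := by
    rintro g ⟨N, p, hp, hgp⟩
    refine ⟨N, conjReflect (2 * N) p, natDegree_conjReflect_le hp, fun z => ?_⟩
    have hz : ‖(z : ℂ)‖ = 1 := by simp
    rw [eval_conjReflect hp hz, ← hgp, ContinuousMap.star_apply, RCLike.star_def, map_mul,
      map_pow]
    linear_combination (-(conj (g z) * (z : ℂ) ^ N)) * pow_mul_conj_pow_self_of_norm_eq_one hz N

theorem dense_laurentFunctions :
    Dense (laurentFunctions : Set C(Metric.sphere (0 : ℂ) 1, ℂ)) := by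
  have h : laurentFunctions.topologicalClosure = ⊤ := by
    rw [eq_top_iff, ← ContinuousMap.elemental_id_eq_top]
    refine StarSubalgebra.topologicalClosure_mono (StarAlgebra.adjoin_le ?_)
    exact Set.singleton_subset_iff.mpr ⟨1, X ^ 2, by simp, fun z => by simp [sq]⟩
  rw [dense_iff_closure_eq, ← StarSubalgebra.topologicalClosure_coe, h]
  rfl

end SzegoQuadrature

open SzegoQuadrature

theorem szego_quadrature_convergence_general
    (μ : Measure ℂ) [IsFiniteMeasure μ]
    (hμT : μ (Metric.sphere (0 : ℂ) 1)ᶜ = 0)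
    (φ : ℕ → Polynomial ℂ)
    (hdeg : ∀ k, (φ k).degree = (k : ℕ))
    (horth : ∀ k m, ∫ z, (φ k).eval z * conj ((φ m).eval z) ∂μ
        = if k = m then 1 else 0)
    (w : ℕ → ℂ)
    (ζ : (n : ℕ) → Fin (n + 1) → ℂ)
    (hζT : ∀ n j, ζ n j ∈ Metric.sphere (0 : ℂ) 1)
    (hζinj : ∀ n, Function.Injective (ζ n))
    (hζ0 : ∀ n j, paraOrtho φ n (w n) (ζ n j) = 0)
    (f : ℂ → ℂ) (hf : ContinuousOn f (Metric.sphere (0 : ℂ) 1)) :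
    Tendsto (fun n => ∑ j : Fin (n + 1), f (ζ n j) / christoffelK φ n (ζ n j) (ζ n j))
      atTop (𝓝 (∫ z, f z ∂μ)) := by
  set Q : ℕ → C(Metric.sphere (0 : ℂ) 1, ℂ) → ℂ :=
    fun n g => ∑ j, g ⟨ζ n j, hζT n j⟩ / christoffelK φ n (ζ n j) (ζ n j)
  set I : C(Metric.sphere (0 : ℂ) 1, ℂ) → ℂ := fun g => ∫ x, g x ∂(μ.comap Subtype.val)
  have hclosed : IsClosed {g | Tendsto (Q · g) atTop (𝓝 (I g))} :=
    (LipschitzWith.uniformEquicontinuous Q _ fun n => lipschitzWith_sum_eval_div_christoffelK hμT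
      hdeg horth (hζT n) (hζinj n) (hζ0 n)).equicontinuous.isClosed_setOfPred_tendsto
      (lipschitzWith_integral_continuousMap _).continuous
  have hlaurent : (laurentFunctions : Set _) ⊆ {g | Tendsto (Q · g) atTop (𝓝 (I g))} := by
    rintro g ⟨N, p, hp, hgp⟩
    exact tendsto_atTop_of_eventually_const fun n hn =>
      sum_eval_div_christoffelK_eq_integral hμT hdeg horth (hζT n) (hζinj n) (hζ0 n) hn hp hgp
  have hf' := hclosed.closure_subset_iff.mpr hlaurent
    (dense_laurentFunctions ⟨_, continuousOn_iff_continuous_domRestrict.mp hf⟩)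
  simpa [Q, I, Set.domRestrict_apply, integral_comap_sphere hμT] using hf'

/-- **Convergence of Szegő quadrature.** If `log μ' ∉ L¹(𝔪)`, then for every continuous
`f : T → ℂ`, the quadrature sums `Q_n(f) = ∑_{j=0}^n f(ζ_{jn}) / K_n(ζ_{jn}, ζ_{jn})`
at the zeros of the para-orthogonal polynomials `B_{n+1}(w_n,·)` converge to `∫_T f dμ`. -/
theorem szego_quadrature_convergence
    (μ : Measure ℂ) [IsFiniteMeasure μ]
    (hμT : μ (Metric.sphere (0 : ℂ) 1)ᶜ = 0)
    (hlog : ¬ Integrable (fun z => Real.log ((μ.rnDeriv circleLeb z).toReal)) circleLeb)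
    (φ : ℕ → Polynomial ℂ)
    (hdeg : ∀ k, (φ k).degree = (k : ℕ))
    (hlead : ∀ k, 0 < ((φ k).leadingCoeff).re ∧ ((φ k).leadingCoeff).im = 0)
    (horth : ∀ k m, ∫ z, (φ k).eval z * conj ((φ m).eval z) ∂μ
        = if k = m then 1 else 0)
    (w : ℕ → ℂ) (hw : ∀ n, w n ∈ Metric.sphere (0 : ℂ) 1)
    (ζ : (n : ℕ) → Fin (n + 1) → ℂ)
    (hζT : ∀ n j, ζ n j ∈ Metric.sphere (0 : ℂ) 1)
    (hζinj : ∀ n, Function.Injective (ζ n))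
    (hζ0 : ∀ n j, paraOrtho φ n (w n) (ζ n j) = 0)
    (f : ℂ → ℂ) (hf : ContinuousOn f (Metric.sphere (0 : ℂ) 1)) :
    Tendsto (fun n => ∑ j : Fin (n + 1), f (ζ n j) / christoffelK φ n (ζ n j) (ζ n j))
      atTop (𝓝 (∫ z, f z ∂μ)) :=
  szego_quadrature_convergence_general μ hμT φ hdeg horth w ζ hζT hζinj hζ0 f hf
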